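/- arXiv:1707.07593 — 2 statements merged into one kernel-verified Lean document; each statement's English description precedes it below -/
import Mathlib

section
/- The evaluation map is continuous on its domain: letting Dom := {(α, n) ∈ 𝒩 × ℕ | {α}(n)↓} carry the subspace topology, the function Dom → 𝒩 sending (α, n) to the unique value {α}(n) is continuous. -/
open Set

/-- `u` is an initial segment of `β`. -/
def IsInitSeg (β : ℕ → ℕ) (u : List ℕ) : Prop :=
  ∀ i : ℕ, ∀ h : i < u.length, β i = u.get ⟨i, h⟩

/-- The set of finite sequences enumerated by `α` at argument `n`. -/
def codeSet (α : ℕ → ℕ) (n : ℕ) : Set (List ℕ) :=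
  {u : List ℕ | ∃ m, α m = Nat.pair n (Encodable.encode u)}

/-- `{α}(n)↓` : the partial function coded by `α` is defined at `n`. -/
def Defined (α : ℕ → ℕ) (n : ℕ) : Prop :=
  ∃! β : ℕ → ℕ, ∀ u : List ℕ, IsInitSeg β u ↔ u ∈ codeSet α n

/-- The domain of the evaluation map, as a subspace of `𝒩 × ℕ`. -/
def Dom : Set ((ℕ → ℕ) × ℕ) := {p | Defined p.1 p.2}

/-- The evaluation map `(α, n) ↦ {α}(n)` on its domain. -/
noncomputable def eval (p : Dom) : ℕ → ℕ :=
  (p.2 : Defined p.1.1 p.1.2).choose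

/-! The value `{α}(n)(k)` is determined by the single entry of `α` that enumerates the initial
segment of `{α}(n)` of length `k + 1`, together with `n`. Both are locally constant on `Dom`, so
every coordinate of `eval` is locally constant. -/

open Filter Topology

lemma IsInitSeg.apply_eq {β γ : ℕ → ℕ} {u : List ℕ} (hβ : IsInitSeg β u) (hγ : IsInitSeg γ u)
    {i : ℕ} (hi : i < u.length) : β i = γ i :=
  (hβ i hi).trans (hγ i hi).symm

lemma isInitSeg_ofFn (β : ℕ → ℕ) (k : ℕ) : IsInitSeg β (List.ofFn fun i : Fin k => β i) := by
  intro i hi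
  simp

lemma isInitSeg_eval_iff (p : Dom) (u : List ℕ) :
    IsInitSeg (eval p) u ↔ u ∈ codeSet p.1.1 p.1.2 :=
  (p.2 : Defined p.1.1 p.1.2).choose_spec.1 u

lemma exists_eval_apply_eq (p : Dom) (k : ℕ) :
    ∃ m, ∀ q : Dom, q.1.1 m = p.1.1 m → q.1.2 = p.1.2 → eval q k = eval p k := by
  set u := List.ofFn fun i : Fin (k + 1) => eval p i
  have hp : IsInitSeg (eval p) u := isInitSeg_ofFn _ _
  obtain ⟨m, hm⟩ := (isInitSeg_eval_iff p u).1 hp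
  refine ⟨m, fun q hα hn => ?_⟩
  have hq : IsInitSeg (eval q) u := (isInitSeg_eval_iff q u).2 ⟨m, by rw [hα, hn, hm]⟩
  exact hq.apply_eq hp (by simp [u])

lemma isLocallyConstant_eval_apply (k : ℕ) : IsLocallyConstant fun p : Dom => eval p k := by
  refine (IsLocallyConstant.iff_eventually_eq _).2 fun p => ?_
  obtain ⟨m, hm⟩ := exists_eval_apply_eq p k
  have hα : ∀ᶠ q : Dom in 𝓝 p, q.1.1 m = p.1.1 m :=
    ((IsLocallyConstant.iff_continuous _).2 <|
      (continuous_apply m).comp (continuous_fst.comp continuous_subtype_val)).eventually_eq p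
  have hn : ∀ᶠ q : Dom in 𝓝 p, q.1.2 = p.1.2 :=
    ((IsLocallyConstant.iff_continuous _).2 <|
      continuous_snd.comp continuous_subtype_val).eventually_eq p
  filter_upwards [hα, hn] with q using hm q

theorem eval_continuous : Continuous eval :=
  continuous_pi fun k => (isLocallyConstant_eval_apply k).continuous
end

section
/- The set of codes of Σ⁰₁ sets is Gδ: the set BC₁ := {α ∈ 𝒩 | α 0 = 1 and for every n ∈ ℕ, {α⁺}(n)↓ and ({α⁺}(n)) 0 = 0}, where α⁺ := (i ↦ α (i+1)), is a Gδ subset of 𝒩 (a countable intersection of open sets). (This is the instance rbc(1) = 2 of the paper's bound on the rank of the Borel coding.) -/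
open Set

/-- The shift `α⁺ = (i ↦ α (i+1))`. -/
def shift (α : ℕ → ℕ) : ℕ → ℕ := fun i => α (i + 1)

/-- The set `BC₁` of codes of `Σ⁰₁` sets: `α 0 = 1`, and for every `n` the
partial function coded by `α⁺` is defined at `n` with value starting with `0`. -/
def BC1 : Set (ℕ → ℕ) :=
  {α | α 0 = 1 ∧ ∀ n : ℕ,
    ∃ β : ℕ → ℕ, (∀ u : List ℕ, IsInitSeg β u ↔ u ∈ codeSet (shift α) n) ∧
      (∀ γ : ℕ → ℕ, (∀ u : List ℕ, IsInitSeg γ u ↔ u ∈ codeSet (shift α) n) → γ = β) ∧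
      β 0 = 0}

/-! A set `S` of words is the set of initial segments of some `β` exactly when it is a chain
for the prefix order containing a word of every length, and then `β` is unique; `β 0 = 0` says
that no `[a]` with `a ≠ 0` lies in `S`. For `S = codeSet (shift α) n` the chain condition and
the condition on `[a]` forbid finitely many enumerations each, so they are closed in `α`, while
"some word of length `k` is enumerated" is open. Closed sets of Baire space are `Gδ`. -/

namespace IsInitSeg

variable {β γ : ℕ → ℕ} {u v : List ℕ}

theorem ofFn (β : ℕ → ℕ) (k : ℕ) : IsInitSeg β (List.ofFn fun i : Fin k => β i) := by
  intro i hi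
  simp

theorem prefix_of_length_le (hu : IsInitSeg β u) (hv : IsInitSeg β v)
    (h : u.length ≤ v.length) : u <+: v := by
  rw [List.prefix_iff_eq_take]
  refine List.ext_getElem (by simp [h]) fun i hiu hiv => ?_
  have := (hu i hiu).symm.trans (hv i (hiu.trans_le h))
  simpa using this

theorem eq_of_length_eq (hu : IsInitSeg β u) (hv : IsInitSeg β v)
    (h : u.length = v.length) : u = v :=
  (hu.prefix_of_length_le hv h.le).eq_of_length h

theorem singleton_iff {a : ℕ} : IsInitSeg β [a] ↔ β 0 = a := by
  simp [IsInitSeg]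

end IsInitSeg

theorem eq_of_forall_isInitSeg_iff {β γ : ℕ → ℕ} (h : ∀ u, IsInitSeg β u ↔ IsInitSeg γ u) :
    β = γ := by
  funext i
  have := (h _).mp (IsInitSeg.ofFn β (i + 1)) i (by simp)
  simpa only [List.get_eq_getElem, List.getElem_ofFn] using this.symm

theorem IsChain.prefix_of_length_le {S : Set (List ℕ)} (hS : IsChain (· <+: ·) S) {u v : List ℕ}
    (hu : u ∈ S) (hv : v ∈ S) (h : u.length ≤ v.length) : u <+: v := by
  rcases hS.total hu hv with huv | hvu
  · exact huv
  · rw [hvu.eq_of_length (hvu.length_le.antisymm h)]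

theorem exists_forall_isInitSeg_iff_mem_iff (S : Set (List ℕ)) :
    (∃ β : ℕ → ℕ, ∀ u, IsInitSeg β u ↔ u ∈ S) ↔
      IsChain (· <+: ·) S ∧ ∀ k, ∃ u ∈ S, u.length = k := by
  constructor
  · rintro ⟨β, hβ⟩
    refine ⟨fun u hu v hv _ => ?_, fun k => ⟨_, (hβ _).mp (IsInitSeg.ofFn β k), by simp⟩⟩
    have hu := (hβ u).mpr hu
    have hv := (hβ v).mpr hv
    rcases le_total u.length v.length with h | h
    · exact .inl (hu.prefix_of_length_le hv h)
    · exact .inr (hv.prefix_of_length_le hu h)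
  · rintro ⟨hS, hlen⟩
    choose w hwS hwlen using hlen
    set β : ℕ → ℕ := fun i => (w (i + 1))[i]'(by simp [hwlen])
    have hβS : ∀ v ∈ S, IsInitSeg β v := fun v hv i hi =>
      (hS.prefix_of_length_le (hwS (i + 1)) hv (by rw [hwlen]; omega)).getElem _
    refine ⟨β, fun u => ⟨fun hu => ?_, hβS u⟩⟩
    rw [hu.eq_of_length_eq (hβS _ (hwS u.length)) (hwlen _).symm]
    exact hwS _

theorem exists_unique_isInitSeg_apply_zero_eq_zero_iff (S : Set (List ℕ)) :
    (∃ β : ℕ → ℕ, (∀ u, IsInitSeg β u ↔ u ∈ S) ∧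
        (∀ γ : ℕ → ℕ, (∀ u, IsInitSeg γ u ↔ u ∈ S) → γ = β) ∧ β 0 = 0) ↔
      (IsChain (· <+: ·) S ∧ ∀ a, [a] ∈ S → a = 0) ∧ ∀ k, ∃ u ∈ S, u.length = k := by
  constructor
  · rintro ⟨β, hβ, -, hβ0⟩
    obtain ⟨hS, hlen⟩ := (exists_forall_isInitSeg_iff_mem_iff S).mp ⟨β, hβ⟩
    exact ⟨⟨hS, fun a ha => (IsInitSeg.singleton_iff.mp ((hβ _).mpr ha)).symm.trans hβ0⟩, hlen⟩
  · rintro ⟨⟨hS, hzero⟩, hlen⟩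
    obtain ⟨β, hβ⟩ := (exists_forall_isInitSeg_iff_mem_iff S).mpr ⟨hS, hlen⟩
    exact ⟨β, hβ, fun γ hγ => eq_of_forall_isInitSeg_iff fun u => (hγ u).trans (hβ u).symm,
      hzero _ ((hβ _).mp (IsInitSeg.singleton_iff.mpr rfl))⟩

theorem isClosed_setOf_isChain {X ι : Type*} [TopologicalSpace X] {U : ι → Set X}
    (hU : ∀ i, IsOpen (U i)) (r : ι → ι → Prop) : IsClosed {x | IsChain r {i | x ∈ U i}} := by
  have h : {x | IsChain r {i | x ∈ U i}} =
      ⋂ (i) (j), {x | x ∈ U i → x ∈ U j → i ≠ j → r i j ∨ r j i} := by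
    ext x
    simp only [IsChain, Set.Pairwise, mem_ofPred_eq, mem_iInter, ne_eq]
    exact ⟨fun h i j hi hj => h hi hj, fun h i hi j hj => h i j hi hj⟩
  rw [h]
  exact isClosed_iInter fun i => isClosed_iInter fun j =>
    isClosed_imp (hU i) (isClosed_imp (hU j) isClosed_const)

theorem continuous_shift : Continuous shift :=
  continuous_pi fun i => continuous_apply (i + 1)

theorem isOpen_setOf_mem_codeSet (n : ℕ) (u : List ℕ) : IsOpen {α | u ∈ codeSet α n} := by
  change IsOpen {α : ℕ → ℕ | ∃ m, α m = Nat.pair n (Encodable.encode u)}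
  rw [ofPred_exists]
  exact isOpen_iUnion fun m => (isOpen_discrete {_}).preimage (continuous_apply m)

theorem bc1_eq : BC1 = {α | α 0 = 1 ∧ ∀ n, IsChain (· <+: ·) (codeSet (shift α) n) ∧
      ∀ a, [a] ∈ codeSet (shift α) n → a = 0} ∩
    ⋂ n, ⋂ k, {α | ∃ u ∈ codeSet (shift α) n, u.length = k} := by
  ext α
  simp only [BC1, exists_unique_isInitSeg_apply_zero_eq_zero_iff, forall_and, mem_inter_iff,
    mem_iInter, mem_ofPred_eq, and_assoc]

theorem bc1_isGδ : IsGδ BC1 := by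
  have hU (n : ℕ) (u : List ℕ) : IsOpen {α | u ∈ codeSet (shift α) n} :=
    (isOpen_setOf_mem_codeSet n u).preimage continuous_shift
  rw [bc1_eq]
  refine IsClosed.isGδ ?_ |>.inter <| .iInter fun n => .iInter fun k => IsOpen.isGδ ?_
  · refine (isClosed_eq (continuous_apply 0) continuous_const).and ?_
    simp only [ofPred_forall]
    refine isClosed_iInter fun n => (isClosed_setOf_isChain (hU n) _).and ?_
    simp only [ofPred_forall]
    exact isClosed_iInter fun a => isClosed_imp (hU n [a]) isClosed_const
  · simp only [ofPred_exists]
    exact isOpen_iUnion fun u => (hU n u).and isOpen_const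
end
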